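/- arXiv:2605.18532 — 3 statements merged into one kernel-verified Lean document; each statement's English description precedes it below -/
import Mathlib

section
/- Let λ₁,…,λₙ (n ≥ 2) be real numbers with H = Σλᵢ > 0, S = Σλᵢ², H² - S = R, and (n-1)²H² - n(n-1)R ≥ 0. Then for every index j: (1/n)(H - √((n-1)²H² - n(n-1)R)) ≤ λⱼ ≤ (1/n)(H + √((n-1)²H² - n(n-1)R)). -/
theorem stmt_5 (n : ℕ) (hn : 2 ≤ n) (lam : Fin n → ℝ) (H S R : ℝ)
    (hH : H = ∑ i, lam i) (hHpos : 0 < H) (hS : S = ∑ i, (lam i) ^ 2)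
    (hR : H ^ 2 - S = R)
    (hD : 0 ≤ ((n : ℝ) - 1) ^ 2 * H ^ 2 - (n : ℝ) * ((n : ℝ) - 1) * R) :
    ∀ j : Fin n,
      (1 / (n : ℝ)) * (H - Real.sqrt (((n : ℝ) - 1) ^ 2 * H ^ 2 - (n : ℝ) * ((n : ℝ) - 1) * R))
        ≤ lam j ∧
      lam j ≤
      (1 / (n : ℝ)) * (H + Real.sqrt (((n : ℝ) - 1) ^ 2 * H ^ 2 - (n : ℝ) * ((n : ℝ) - 1) * R)) := by
  intro j
  set D : ℝ := ((n : ℝ) - 1) ^ 2 * H ^ 2 - (n : ℝ) * ((n : ℝ) - 1) * R with hDdef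
  have hnR : (2 : ℝ) ≤ (n : ℝ) := by exact_mod_cast hn
  have hcard : (Finset.univ.erase j).card = n - 1 := by
    simp [Finset.card_erase_of_mem]
  have hcardR : ((Finset.univ.erase j).card : ℝ) = (n : ℝ) - 1 := by
    rw [hcard]
    have : (1:ℕ) ≤ n := by omega
    push_cast [this]; ring
  have hsum : ∑ i ∈ Finset.univ.erase j, lam i = H - lam j := by
    rw [hH, ← Finset.add_sum_erase _ _ (Finset.mem_univ j)]; ring
  have hsumsq : ∑ i ∈ Finset.univ.erase j, (lam i) ^ 2 = S - (lam j) ^ 2 := by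
    rw [hS, ← Finset.add_sum_erase _ _ (Finset.mem_univ j)]; ring
  have hCS := sq_sum_le_card_mul_sum_sq (s := Finset.univ.erase j) (f := lam)
  rw [hsum, hsumsq, hcardR] at hCS
  have key : ((n : ℝ) * lam j - H) ^ 2 ≤ D := by
    have hRs : R = H ^ 2 - S := hR.symm
    nlinarith [hCS, sq_nonneg (lam j)]
  have habs : |(n : ℝ) * lam j - H| ≤ Real.sqrt D := Real.abs_le_sqrt key
  have h1 := abs_le.mp habs
  have hnpos : (0 : ℝ) < n := by linarith
  have hs := Real.sqrt_nonneg D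
  constructor
  · rw [div_mul_eq_mul_div, div_le_iff₀ hnpos]
    nlinarith [h1.1]
  · rw [div_mul_eq_mul_div, le_div_iff₀ hnpos]
    nlinarith [h1.2]
end

section
/- Let λ₁,…,λₙ (n ≥ 2) be real numbers with H = Σλᵢ > 0, S = Σλᵢ², H² - S = R, and suppose (n-1)²H² ≥ n(n-1)R. Then for every index j, the Ricci eigenvalue R_{jj} := H·λⱼ - λⱼ² satisfies R_{jj} ≥ H²/4 - (1/n²)·((n-2)H/2 + √((n-1)²H² - n(n-1)R))². -/
theorem stmt_6 (n : ℕ) (hn : 2 ≤ n) (lam : Fin n → ℝ) (H S R : ℝ)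
    (hH : H = ∑ i, lam i) (hHpos : 0 < H) (hS : S = ∑ i, (lam i) ^ 2)
    (hR : H ^ 2 - S = R)
    (hD : (n : ℝ) * ((n : ℝ) - 1) * R ≤ ((n : ℝ) - 1) ^ 2 * H ^ 2) :
    ∀ j : Fin n,
      H * lam j - (lam j) ^ 2 ≥
        H ^ 2 / 4 - (1 / (n : ℝ) ^ 2) *
          (((n : ℝ) - 2) * H / 2 +
            Real.sqrt (((n : ℝ) - 1) ^ 2 * H ^ 2 - (n : ℝ) * ((n : ℝ) - 1) * R)) ^ 2 := by
  intro j
  have hn2 : (2:ℝ) ≤ (n:ℝ) := by exact_mod_cast hn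
  set μ := lam j with hμ
  set D : ℝ := ((n : ℝ) - 1) ^ 2 * H ^ 2 - (n : ℝ) * ((n : ℝ) - 1) * R with hDdef
  have hD0 : 0 ≤ D := by simp [hDdef]; linarith
  have hsqrt : Real.sqrt D ^ 2 = D := Real.sq_sqrt hD0
  have hsqrt0 : 0 ≤ Real.sqrt D := Real.sqrt_nonneg D
  -- Cauchy-Schwarz on the other entries
  have hsum : ∑ i ∈ Finset.univ.erase j, lam i = H - μ := by
    rw [hH, Finset.sum_erase_eq_sub (Finset.mem_univ j)]
  have hsumsq : ∑ i ∈ Finset.univ.erase j, (lam i) ^ 2 = S - μ ^ 2 := by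
    rw [hS, Finset.sum_erase_eq_sub (Finset.mem_univ j)]
  have hcard : ((Finset.univ.erase j).card : ℝ) = (n : ℝ) - 1 := by
    rw [Finset.card_erase_of_mem (Finset.mem_univ j)]
    simp
    rw [Nat.cast_sub (le_trans one_le_two hn)]
    simp
  have hCS := sq_sum_le_card_mul_sum_sq (s := Finset.univ.erase j) (f := lam)
  rw [hsum, hsumsq, hcard] at hCS
  -- key: (n μ - H)^2 ≤ D
  have hkey : ((n:ℝ) * μ - H) ^ 2 ≤ D := by
    simp only [hDdef]
    nlinarith [hCS, hR]
  have habs : |(n:ℝ) * μ - H| ≤ Real.sqrt D := by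
    rw [← Real.sqrt_sq_eq_abs]
    exact Real.sqrt_le_sqrt hkey
  have habs2 : ((n:ℝ) * μ - H) ^ 2 ≤ Real.sqrt D ^ 2 := by
    rw [hsqrt]; exact hkey
  have hnpos : (0:ℝ) < (n:ℝ) := by linarith
  -- |μ - H/2| ≤ (1/n)((n-2)H/2 + √D)
  have hstep : ((n:ℝ) * μ - (n:ℝ) * H / 2) ^ 2 ≤ (((n : ℝ) - 2) * H / 2 + Real.sqrt D) ^ 2 := by
    have h1 : |(n:ℝ) * μ - (n:ℝ) * H / 2| ≤ ((n : ℝ) - 2) * H / 2 + Real.sqrt D := by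
      have : (n:ℝ) * μ - (n:ℝ) * H / 2 = ((n:ℝ) * μ - H) - (((n:ℝ) - 2) * H / 2) := by ring
      rw [this]
      calc |((n:ℝ) * μ - H) - (((n:ℝ) - 2) * H / 2)| ≤ |(n:ℝ) * μ - H| + |((n:ℝ) - 2) * H / 2| :=
            abs_sub (_) (_)
        _ ≤ Real.sqrt D + ((n:ℝ) - 2) * H / 2 := by
            have : |((n:ℝ) - 2) * H / 2| = ((n:ℝ) - 2) * H / 2 := by
              rw [abs_of_nonneg]
              apply div_nonneg _ (by norm_num)
              exact mul_nonneg (by linarith) hHpos.le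
            rw [this]; linarith
        _ = ((n : ℝ) - 2) * H / 2 + Real.sqrt D := by ring
    have h2 : 0 ≤ ((n : ℝ) - 2) * H / 2 + Real.sqrt D := by
      have : 0 ≤ ((n : ℝ) - 2) * H / 2 := by
        apply div_nonneg _ (by norm_num)
        exact mul_nonneg (by linarith) hHpos.le
      linarith
    calc ((n:ℝ) * μ - (n:ℝ) * H / 2) ^ 2 = |(n:ℝ) * μ - (n:ℝ) * H / 2| ^ 2 := (sq_abs _).symm
      _ ≤ (((n : ℝ) - 2) * H / 2 + Real.sqrt D) ^ 2 := by
          apply pow_le_pow_left₀ (abs_nonneg _) h1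
  -- finish
  have hn2' : (0:ℝ) < (n:ℝ)^2 := by positivity
  rw [ge_iff_le, sub_le_iff_le_add]
  have heq : H ^ 2 / 4 - (μ - H / 2) ^ 2 = H * μ - μ ^ 2 := by ring
  have hfin : (μ - H / 2) ^ 2 ≤ 1 / (n:ℝ)^2 * (((n:ℝ) - 2) * H / 2 + Real.sqrt D) ^ 2 := by
    rw [one_div, inv_mul_eq_div, le_div_iff₀ hn2']
    calc (μ - H / 2) ^ 2 * (n:ℝ)^2 = ((n:ℝ) * μ - (n:ℝ) * H / 2) ^ 2 := by ring
      _ ≤ _ := hstep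
  linarith
end

section
/- Let n ≥ 3 and let λ₁,…,λₙ be real numbers with H = Σλᵢ > 0, S = Σλᵢ², R = H² - S, 0 < S < 1, and R > n-2. Then for every j, H·λⱼ - λⱼ² > (R - (n-2))/n > 0. -/
theorem stmt_7 (n : ℕ) (hn : 3 ≤ n) (lam : Fin n → ℝ) (H S R : ℝ)
    (hH : H = ∑ i, lam i) (hHpos : 0 < H) (hS : S = ∑ i, (lam i) ^ 2)
    (hR : R = H ^ 2 - S) (hSpos : 0 < S) (hSlt : S < 1)
    (hRgt : R > (n : ℝ) - 2) :
    ∀ j : Fin n,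
      H * lam j - (lam j) ^ 2 > (R - ((n : ℝ) - 2)) / (n : ℝ) ∧
      (R - ((n : ℝ) - 2)) / (n : ℝ) > 0 := by
  intro j
  have hn3 : (3 : ℝ) ≤ (n : ℝ) := by exact_mod_cast hn
  have hnpos : (0 : ℝ) < n := by linarith
  set x := lam j with hx
  have hsum : (∑ i ∈ Finset.univ.erase j, lam i) = H - x := by
    rw [hH, ← Finset.add_sum_erase _ _ (Finset.mem_univ j)]; ring
  have hsumsq : (∑ i ∈ Finset.univ.erase j, (lam i) ^ 2) = S - x ^ 2 := by
    rw [hS, ← Finset.add_sum_erase _ _ (Finset.mem_univ j)]; ring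
  have hcard : ((Finset.univ.erase j).card : ℝ) = (n : ℝ) - 1 := by
    rw [Finset.card_erase_of_mem (Finset.mem_univ j)]
    simp
    rw [Nat.cast_sub (by omega)]
    simp
  have hcs : (H - x) ^ 2 ≤ ((n : ℝ) - 1) * (S - x ^ 2) := by
    have := sq_sum_le_card_mul_sum_sq (s := Finset.univ.erase j) (f := lam)
    rw [hsum, hsumsq, hcard] at this
    exact this
  have hcs2 : H ^ 2 ≤ (n : ℝ) * S := by
    have := sq_sum_le_card_mul_sum_sq (s := (Finset.univ : Finset (Fin n))) (f := lam)
    rw [← hH, ← hS] at this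
    simpa using this
  have hRpos : R - ((n : ℝ) - 2) > 0 := by linarith
  constructor
  · rw [gt_iff_lt, div_lt_iff₀ hnpos]
    subst hR
    have h1 : 2*(H*x) ≥ (n:ℝ)*x^2 + H^2 - ((n:ℝ)-1)*S := by nlinarith [hcs]
    have h2 : H*x - S + 1 > 0 := by
      nlinarith [mul_nonneg hnpos.le (sq_nonneg x), mul_le_mul_of_nonneg_right hn3 (by linarith : (0:ℝ) ≤ 1 - S)]
    nlinarith [mul_pos (by linarith : (0:ℝ) < (n:ℝ) - 2) h2, mul_nonneg hnpos.le (sq_nonneg x)]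
  · positivity
end
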